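/- Let x_1,...,x_n ∈ ℝ^d with ‖x_i‖ ≤ 1, Σ̂ = (1/n)∑_i x_i x_iᵀ, λ > 0, and let b ∈ ℝ^n be a vector with at most αn nonzero entries, each bounded in absolute value by ζ > 0. Then ‖(1/n)∑_{i=1}^n b_i x_i‖_{(Σ̂ + λI)^{-1}} ≤ ζ√α, where ‖v‖_A := √(vᵀ A v). -/

import Mathlib

/-!
Write `Σ̂ = n⁻¹ XᵀX` and `v = n⁻¹ Xᵀb`, where `X` has rows `x_i`, put `A = Σ̂ + λI`,
`w = A⁻¹v` and `T = vᵀA⁻¹v`. Then `T = n⁻¹ bᵀXw` while `n⁻¹‖Xw‖² ≤ wᵀAw = T`, so Cauchy–Schwarz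
gives `T² ≤ n⁻² ‖b‖² ‖Xw‖² ≤ n⁻¹ ‖b‖² T`, i.e. `T ≤ ‖b‖²/n`. Finally `‖b‖² ≤ ζ² αn` by sparsity.
-/

open Finset Matrix

theorem sum_vecMulVec_self_eq_transpose_mul_self {m d R : Type*} [Fintype m] [CommSemiring R]
    (X : Matrix m d R) : ∑ i, vecMulVec (X i) (X i) = Xᵀ * X := by
  ext j k
  simp [mul_apply, Matrix.sum_apply, vecMulVec_apply]

theorem dotProduct_transpose_mul_self_mulVec {m d R : Type*} [Fintype m] [Fintype d]
    [CommSemiring R] (X : Matrix m d R) (y : d → R) :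
    y ⬝ᵥ (Xᵀ * X) *ᵥ y = X *ᵥ y ⬝ᵥ X *ᵥ y := by
  rw [← mulVec_mulVec, dotProduct_mulVec, vecMul_transpose]

theorem transpose_mulVec_dotProduct_inv_mulVec_le {m d : Type*} [Fintype m] [Fintype d]
    [DecidableEq d] (X : Matrix m d ℝ) (A : Matrix d d ℝ) (hA : IsUnit A.det) {c : ℝ}
    (hc : 0 < c) (hXA : ∀ y, c * (X *ᵥ y ⬝ᵥ X *ᵥ y) ≤ y ⬝ᵥ A *ᵥ y) (b : m → ℝ) :
    c * (Xᵀ *ᵥ b ⬝ᵥ A⁻¹ *ᵥ Xᵀ *ᵥ b) ≤ b ⬝ᵥ b := by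
  set w := A⁻¹ *ᵥ Xᵀ *ᵥ b
  set T := Xᵀ *ᵥ b ⬝ᵥ w
  have hT : T = b ⬝ᵥ X *ᵥ w := by
    rw [dotProduct_mulVec, ← mulVec_transpose]
  have hXw : c * (X *ᵥ w ⬝ᵥ X *ᵥ w) ≤ T := by
    have hwAw : w ⬝ᵥ A *ᵥ w = T := by
      rw [mulVec_mulVec, mul_nonsing_inv A hA, one_mulVec, dotProduct_comm]
    exact hwAw ▸ hXA w
  have hCS : T ^ 2 ≤ (b ⬝ᵥ b) * (X *ᵥ w ⬝ᵥ X *ᵥ w) := by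
    simpa only [hT, dotProduct, sq] using sum_mul_sq_le_sq_mul_sq univ b (X *ᵥ w)
  have hbb : 0 ≤ b ⬝ᵥ b := dotProduct_self_star_nonneg b
  have hXw0 : 0 ≤ X *ᵥ w ⬝ᵥ X *ᵥ w := dotProduct_self_star_nonneg _
  rcases (mul_nonneg hc.le hXw0 |>.trans hXw).eq_or_lt with hT0 | hT0
  · rw [← hT0, mul_zero]
    exact hbb
  · refine le_of_mul_le_mul_right ?_ hT0
    nlinarith

theorem sum_sq_le_sq_mul_card_ne_zero {ι : Type*} [Fintype ι] (f : ι → ℝ) {ζ : ℝ}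
    (hf : ∀ i, |f i| ≤ ζ) : ∑ i, f i ^ 2 ≤ ζ ^ 2 * #{i | f i ≠ 0} :=
  calc ∑ i, f i ^ 2 = ∑ i with f i ≠ 0, f i ^ 2 := by
        rw [sum_filter_of_ne fun i _ h => by simpa using h]
    _ ≤ ∑ i with f i ≠ 0, ζ ^ 2 := sum_le_sum fun i _ => sq_le_sq.2 ((hf i).trans (le_abs_self ζ))
    _ = ζ ^ 2 * #{i | f i ≠ 0} := by rw [sum_const, nsmul_eq_mul, mul_comm]

theorem stmt1_general {n d : ℕ} (hn : 0 < n) (x : Fin n → EuclideanSpace ℝ (Fin d))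
    (lam α ζ : ℝ) (hlam : 0 < lam)
    (hζ : 0 < ζ)
    (b : Fin n → ℝ)
    (hcard : ((univ.filter fun i => b i ≠ 0).card : ℝ) ≤ α * n)
    (hb : ∀ i, |b i| ≤ ζ)
    (Sighat : Matrix (Fin d) (Fin d) ℝ)
    (hSig : Sighat = (n : ℝ)⁻¹ • ∑ i, vecMulVec (fun j => x i j) (fun j => x i j))
    (v : Fin d → ℝ) (hv : v = fun j => (n : ℝ)⁻¹ * ∑ i, b i * x i j) :
    Real.sqrt (v ⬝ᵥ (Sighat + lam • 1)⁻¹.mulVec v) ≤ ζ * Real.sqrt α := by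
  set X : Matrix (Fin n) (Fin d) ℝ := of fun i j => x i j
  have hn' : (0 : ℝ) < n := Nat.cast_pos.2 hn
  have hSigX : Sighat = (n : ℝ)⁻¹ • (Xᵀ * X) := by
    rw [hSig, ← sum_vecMulVec_self_eq_transpose_mul_self]
    rfl
  have hvX : v = (n : ℝ)⁻¹ • Xᵀ *ᵥ b := by
    ext j
    simp [hv, X, mulVec, dotProduct, mul_comm]
  have hA : (Sighat + lam • 1).PosDef := by
    rw [hSigX, ← conjTranspose_eq_transpose_of_trivial]
    exact PosDef.posSemidef_add
      ((posSemidef_conjTranspose_mul_self X).smul (inv_nonneg.2 hn'.le)) (PosDef.one.smul hlam)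
  have hXA : ∀ y, (n : ℝ)⁻¹ * (X *ᵥ y ⬝ᵥ X *ᵥ y) ≤ y ⬝ᵥ (Sighat + lam • 1) *ᵥ y := by
    intro y
    rw [add_mulVec, dotProduct_add, hSigX, smul_mulVec, dotProduct_smul,
      dotProduct_transpose_mul_self_mulVec, smul_mulVec, one_mulVec, dotProduct_smul,
      smul_eq_mul, smul_eq_mul, le_add_iff_nonneg_right]
    exact mul_nonneg hlam.le (dotProduct_self_star_nonneg y)
  have hquad := transpose_mulVec_dotProduct_inv_mulVec_le X _ hA.det_pos.ne'.isUnit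
    (inv_pos.2 hn') hXA b
  have hsparse : b ⬝ᵥ b ≤ ζ ^ 2 * (α * n) := by
    simpa only [dotProduct, ← sq] using (sum_sq_le_sq_mul_card_ne_zero b hb).trans
      (mul_le_mul_of_nonneg_left hcard (sq_nonneg ζ))
  have hT : v ⬝ᵥ (Sighat + lam • 1)⁻¹ *ᵥ v ≤ ζ ^ 2 * α := by
    rw [hvX, mulVec_smul, dotProduct_smul, smul_dotProduct, smul_eq_mul, smul_eq_mul]
    calc _ ≤ (n : ℝ)⁻¹ * (ζ ^ 2 * (α * n)) :=
          mul_le_mul_of_nonneg_left (hquad.trans hsparse) (inv_nonneg.2 hn'.le)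
      _ = ζ ^ 2 * α := by field_simp
  calc Real.sqrt (v ⬝ᵥ (Sighat + lam • 1)⁻¹ *ᵥ v) ≤ Real.sqrt (ζ ^ 2 * α) := Real.sqrt_le_sqrt hT
    _ = ζ * Real.sqrt α := by rw [Real.sqrt_mul (sq_nonneg ζ), Real.sqrt_sq hζ.le]

/-- If `b ∈ ℝⁿ` has at most `αn` nonzero entries, each bounded by `ζ`, `‖x_i‖ ≤ 1`,
`Σ̂ = (1/n)∑ x_i x_iᵀ` and `λ > 0`, then
`‖(1/n)∑ b_i x_i‖_{(Σ̂+λI)⁻¹} ≤ ζ √α`, where `‖v‖_A = √(vᵀ A v)`. -/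
theorem stmt1 {n d : ℕ} (hn : 0 < n) (x : Fin n → EuclideanSpace ℝ (Fin d))
    (hx : ∀ i, ‖x i‖ ≤ 1) (lam α ζ : ℝ) (hlam : 0 < lam)
    (hα0 : 0 ≤ α) (hα1 : α ≤ 1) (hζ : 0 < ζ)
    (b : Fin n → ℝ)
    (hcard : ((univ.filter fun i => b i ≠ 0).card : ℝ) ≤ α * n)
    (hb : ∀ i, |b i| ≤ ζ)
    (Sighat : Matrix (Fin d) (Fin d) ℝ)
    (hSig : Sighat = (n : ℝ)⁻¹ • ∑ i, vecMulVec (fun j => x i j) (fun j => x i j))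
    (v : Fin d → ℝ) (hv : v = fun j => (n : ℝ)⁻¹ * ∑ i, b i * x i j) :
    Real.sqrt (v ⬝ᵥ (Sighat + lam • 1)⁻¹.mulVec v) ≤ ζ * Real.sqrt α :=
  stmt1_general hn x lam α ζ hlam hζ b hcard hb Sighat hSig v hv
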